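/- arXiv:1910.02541 — 6 statements merged into one kernel-verified Lean document; each statement's English description precedes it below -/
import Mathlib

section
/- Let Q and Q̃ be positive definite symmetric n×n real matrices and v, ṽ ∈ ℝⁿ. The shifted ellipsoids {y + v : yᵀQy = 1} and {y + ṽ : yᵀQ̃y = 1} in ℝⁿ can be mapped to each other by an invertible linear transformation if and only if vᵀQv = ṽᵀQ̃ṽ. -/
open Matrix

/-!
If an invertible linear map `L` carries the ellipsoid centred at `v` onto the one centred at `ṽ`,
then the image is symmetric about both `L v` and `ṽ`, hence invariant under translation by
`2 (L v - ṽ)`; positive definiteness forces `L v = ṽ`. So `L` maps the level set `yᵀQy = 1` onto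
`yᵀQ̃y = 1`, and by homogeneity `Q̃(L y) = Q(y)` for all `y`; in particular `vᵀQv = ṽᵀQ̃ṽ`.
Conversely, factor `Q = AᵀA`, `Q̃ = BᵀB` with `A`, `B` invertible. If `‖A v‖ = ‖B ṽ‖`, the
reflection `R` in the hyperplane orthogonal to `A v - B ṽ` sends `A v` to `B ṽ`, and
`L = B⁻¹ R A` preserves the forms and the centres.
-/

variable {ι κ : Type*} [Fintype ι] [Fintype κ]

def ellipsoid (Q : Matrix ι ι ℝ) (v : ι → ℝ) : Set (ι → ℝ) :=
  {z | ∃ y, y ⬝ᵥ Q *ᵥ y = 1 ∧ z = y + v}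

lemma mem_ellipsoid {Q : Matrix ι ι ℝ} {v z : ι → ℝ} :
    z ∈ ellipsoid Q v ↔ (z - v) ⬝ᵥ Q *ᵥ (z - v) = 1 :=
  ⟨fun ⟨y, hy, hz⟩ => by rwa [hz, add_sub_cancel_right], fun h => ⟨z - v, h, by abel⟩⟩

namespace Matrix

lemma smul_dotProduct_mulVec_smul (Q : Matrix ι ι ℝ) (s : ℝ) (x : ι → ℝ) :
    (s • x) ⬝ᵥ Q *ᵥ (s • x) = s ^ 2 * (x ⬝ᵥ Q *ᵥ x) := by
  rw [smul_dotProduct, mulVec_smul, dotProduct_smul, smul_eq_mul, smul_eq_mul]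
  ring

lemma neg_dotProduct_mulVec_neg (Q : Matrix ι ι ℝ) (x : ι → ℝ) :
    (-x) ⬝ᵥ Q *ᵥ (-x) = x ⬝ᵥ Q *ᵥ x := by
  rw [neg_dotProduct, mulVec_neg, dotProduct_neg, neg_neg]

namespace PosDef

variable {Q : Matrix ι ι ℝ}

lemma dotProduct_mulVec_self_pos (hQ : Q.PosDef) {x : ι → ℝ} (hx : x ≠ 0) :
    0 < x ⬝ᵥ Q *ᵥ x := by
  simpa using hQ.dotProduct_mulVec_pos hx

lemma inv_sqrt_smul_dotProduct_mulVec (hQ : Q.PosDef) {x : ι → ℝ} (hx : x ≠ 0) :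
    ((√(x ⬝ᵥ Q *ᵥ x))⁻¹ • x) ⬝ᵥ Q *ᵥ ((√(x ⬝ᵥ Q *ᵥ x))⁻¹ • x) = 1 := by
  have hpos := hQ.dotProduct_mulVec_self_pos hx
  rw [smul_dotProduct_mulVec_smul, inv_pow, Real.sq_sqrt hpos.le, inv_mul_cancel₀ hpos.ne']

lemma eq_zero_of_forall_dotProduct_mulVec_add_eq_one (hQ : Q.PosDef) {w : ι → ℝ}
    (h : ∀ x, x ⬝ᵥ Q *ᵥ x = 1 → (x + w) ⬝ᵥ Q *ᵥ (x + w) = 1) : w = 0 := by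
  by_contra hw
  have hpos := hQ.dotProduct_mulVec_self_pos hw
  have h1 := h _ (hQ.inv_sqrt_smul_dotProduct_mulVec hw)
  set s := √(w ⬝ᵥ Q *ᵥ w)
  have hs : 0 < s := Real.sqrt_pos.2 hpos
  have hsq : s ^ 2 = w ⬝ᵥ Q *ᵥ w := Real.sq_sqrt hpos.le
  -- `s⁻¹ • w` lies on the level set, but its translate by `w` is at level `(1 + s) ^ 2 > 1`.
  rw [show s⁻¹ • w + w = (s⁻¹ + 1) • w by rw [add_smul, one_smul],
    smul_dotProduct_mulVec_smul, ← hsq, ← mul_pow, add_mul, one_mul, inv_mul_cancel₀ hs.ne'] at h1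
  nlinarith

lemma dotProduct_mulVec_map_eq_of_forall_eq_one (hQ : Q.PosDef) {Q' : Matrix κ κ ℝ}
    (f : (ι → ℝ) →ₗ[ℝ] (κ → ℝ)) (hf : ∀ y, y ⬝ᵥ Q *ᵥ y = 1 → f y ⬝ᵥ Q' *ᵥ f y = 1) (y : ι → ℝ) :
    f y ⬝ᵥ Q' *ᵥ f y = y ⬝ᵥ Q *ᵥ y := by
  rcases eq_or_ne y 0 with rfl | hy
  · simp
  have hpos := hQ.dotProduct_mulVec_self_pos hy
  have h1 := hf _ (hQ.inv_sqrt_smul_dotProduct_mulVec hy)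
  rw [map_smul, smul_dotProduct_mulVec_smul, inv_pow, Real.sq_sqrt hpos.le] at h1
  field_simp at h1
  exact h1

open scoped MatrixOrder in
lemma exists_linearEquiv_euclideanSpace_norm_sq (hQ : Q.PosDef) :
    ∃ Φ : (ι → ℝ) ≃ₗ[ℝ] EuclideanSpace ℝ ι, ∀ x, ‖Φ x‖ ^ 2 = x ⬝ᵥ Q *ᵥ x := by
  classical
  obtain ⟨B, rfl⟩ := CStarAlgebra.nonneg_iff_eq_star_mul_self.mp hQ.posSemidef.nonneg
  have hB : ∀ x, x ⬝ᵥ (star B * B) *ᵥ x = (B *ᵥ x) ⬝ᵥ (B *ᵥ x) := fun x => by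
    rw [← mulVec_mulVec, dotProduct_mulVec, star_eq_conjTranspose, vecMul_conjTranspose]
    simp
  have hinj : Function.Injective B.mulVecLin := by
    rw [← LinearMap.ker_eq_bot, LinearMap.ker_eq_bot']
    intro x hx
    by_contra hx0
    have := hQ.dotProduct_mulVec_self_pos hx0
    rw [hB, show B *ᵥ x = 0 from hx, dotProduct_zero] at this
    exact lt_irrefl 0 this
  refine ⟨(LinearEquiv.ofInjectiveEndo _ hinj).trans (WithLp.linearEquiv 2 ℝ (ι → ℝ)).symm,
    fun x => ?_⟩
  rw [hB, EuclideanSpace.real_norm_sq_eq]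
  simp [dotProduct, sq]

lemma exists_linearEquiv_apply_eq_of_dotProduct_mulVec_eq {Q' : Matrix ι ι ℝ} (hQ : Q.PosDef)
    (hQ' : Q'.PosDef) {v v' : ι → ℝ} (h : v ⬝ᵥ Q *ᵥ v = v' ⬝ᵥ Q' *ᵥ v') :
    ∃ L : (ι → ℝ) ≃ₗ[ℝ] (ι → ℝ), L v = v' ∧ ∀ y, L y ⬝ᵥ Q' *ᵥ L y = y ⬝ᵥ Q *ᵥ y := by
  obtain ⟨Φ, hΦ⟩ := hQ.exists_linearEquiv_euclideanSpace_norm_sq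
  obtain ⟨Ψ, hΨ⟩ := hQ'.exists_linearEquiv_euclideanSpace_norm_sq
  have hnorm : ‖Φ v‖ = ‖Ψ v'‖ := by
    rw [← sq_eq_sq₀ (norm_nonneg _) (norm_nonneg _), hΦ, hΨ, h]
  let R := (Submodule.span ℝ {Φ v - Ψ v'})ᗮ.reflection
  refine ⟨Φ.trans (R.toLinearEquiv.trans Ψ.symm), ?_, fun y => ?_⟩
  · simp [R, Submodule.reflection_sub hnorm]
  · rw [← hΨ, ← hΦ]
    simp

end PosDef
end Matrix

variable {Q : Matrix ι ι ℝ} {Q' : Matrix κ κ ℝ} {v : ι → ℝ} {v' : κ → ℝ}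

lemma two_smul_sub_mem_ellipsoid {z : ι → ℝ} (hz : z ∈ ellipsoid Q v) :
    (2 : ℝ) • v - z ∈ ellipsoid Q v := by
  rw [mem_ellipsoid] at hz ⊢
  rwa [show (2 : ℝ) • v - z - v = -(z - v) by module, neg_dotProduct_mulVec_neg]

lemma Matrix.PosDef.eq_of_two_smul_sub_mem_ellipsoid (hQ : Q.PosDef) {c : ι → ℝ}
    (h : ∀ z ∈ ellipsoid Q v, (2 : ℝ) • c - z ∈ ellipsoid Q v) : c = v := by
  suffices (2 : ℝ) • (c - v) = 0 by
    rwa [smul_eq_zero_iff_right two_ne_zero, sub_eq_zero] at this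
  refine hQ.eq_zero_of_forall_dotProduct_mulVec_add_eq_one fun x hx => ?_
  have hz : v - x ∈ ellipsoid Q v := by
    rwa [mem_ellipsoid, sub_sub_cancel_left, neg_dotProduct_mulVec_neg]
  have := mem_ellipsoid.1 (h _ hz)
  rwa [show (2 : ℝ) • c - (v - x) - v = x + (2 : ℝ) • (c - v) by module] at this

lemma map_eq_of_image_ellipsoid_eq (hQ' : Q'.PosDef) (f : (ι → ℝ) →ₗ[ℝ] (κ → ℝ))
    (hf : f '' ellipsoid Q v = ellipsoid Q' v') : f v = v' := by
  refine hQ'.eq_of_two_smul_sub_mem_ellipsoid ?_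
  rw [← hf]
  rintro _ ⟨z, hz, rfl⟩
  exact ⟨(2 : ℝ) • v - z, two_smul_sub_mem_ellipsoid hz, by rw [map_sub, map_smul]⟩

lemma map_mem_of_image_ellipsoid_eq (f : (ι → ℝ) →ₗ[ℝ] (κ → ℝ))
    (hf : f '' ellipsoid Q v = ellipsoid Q' v') (hv : f v = v') {y : ι → ℝ}
    (hy : y ⬝ᵥ Q *ᵥ y = 1) : f y ⬝ᵥ Q' *ᵥ f y = 1 := by
  have : f (y + v) ∈ ellipsoid Q' v' := hf ▸ Set.mem_image_of_mem f ⟨y, hy, rfl⟩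
  rwa [mem_ellipsoid, map_add, hv, add_sub_cancel_right] at this

lemma image_ellipsoid_eq_iff (hQ : Q.PosDef) (hQ' : Q'.PosDef) (L : (ι → ℝ) ≃ₗ[ℝ] (κ → ℝ)) :
    L '' ellipsoid Q v = ellipsoid Q' v' ↔
      L v = v' ∧ ∀ y, L y ⬝ᵥ Q' *ᵥ L y = y ⬝ᵥ Q *ᵥ y := by
  refine ⟨fun hL => ?_, fun ⟨hv, hq⟩ => ?_⟩
  · have hv := map_eq_of_image_ellipsoid_eq hQ' L.toLinearMap hL
    exact ⟨hv, hQ.dotProduct_mulVec_map_eq_of_forall_eq_one L.toLinearMap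
      fun _ => map_mem_of_image_ellipsoid_eq L.toLinearMap hL hv⟩
  · ext z
    rw [LinearEquiv.image_eq_preimage_symm, Set.mem_preimage, mem_ellipsoid, mem_ellipsoid, ← hq,
      map_sub, LinearEquiv.apply_symm_apply, hv]

theorem stmt3 (n : ℕ) (Q Qt : Matrix (Fin n) (Fin n) ℝ)
    (hQ : Q.PosDef) (hQt : Qt.PosDef) (v vt : Fin n → ℝ) :
    (∃ L : (Fin n → ℝ) ≃ₗ[ℝ] (Fin n → ℝ),
        L '' {z | ∃ y : Fin n → ℝ, y ⬝ᵥ Q *ᵥ y = 1 ∧ z = y + v}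
          = {z | ∃ y : Fin n → ℝ, y ⬝ᵥ Qt *ᵥ y = 1 ∧ z = y + vt})
      ↔ v ⬝ᵥ Q *ᵥ v = vt ⬝ᵥ Qt *ᵥ vt := by
  constructor
  · rintro ⟨L, hL⟩
    obtain ⟨hv, hq⟩ := (image_ellipsoid_eq_iff hQ hQt L).1 hL
    rw [← hv, hq]
  · intro h
    obtain ⟨L, hv, hq⟩ := hQ.exists_linearEquiv_apply_eq_of_dotProduct_mulVec_eq hQt h
    exact ⟨L, (image_ellipsoid_eq_iff hQ hQt L).2 ⟨hv, hq⟩⟩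
end

section
/- Let A, C ∈ ℝ with C > 0, and set K₃ = 1/C, K₂ = −3A/C, K₁ = 3A²/C + 1, K₀ = −A(A²+C)/C, and P(θ) = K₃cos³θ + K₂cos²θ sin θ + K₁cos θ sin²θ + K₀sin³θ. Then the Riemannian norm f(θ) = √(cos²θ − 2A cos θ sin θ + (A²+C)sin²θ) (coming from the matrix g = [[1, −A],[−A, A²+C]]) satisfies the ODE (f + f'')·P = −sin θ·f' + cos θ·f for all θ. -/
open Real

/-! Write `f = √Q` with `Q θ = a cos² θ + 2b cos θ sin θ + d sin² θ` the quadratic form of `g` on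
the unit circle. The derivative of such a `Q` is again of this shape, and
`4Q² + 2QQ'' - Q'² = 4(ad - b²)` on the circle, so `f + f'' = det g / f³`; likewise
`cos θ · f - sin θ · f' = (a cos θ + b sin θ) / f`. Since `det g = C`, the ODE reduces to the
polynomial identity `C · P = Q · (cos θ - A sin θ)`. -/

section SqrtDeriv

variable {Q Q' Q'' : ℝ → ℝ}

theorem deriv_sqrt_eq_of_hasDerivAt (hQ : ∀ x, 0 < Q x) (hQ' : ∀ x, HasDerivAt Q (Q' x) x) :
    deriv (fun x => √(Q x)) = fun x => Q' x / (2 * √(Q x)) :=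
  funext fun x => ((hQ' x).sqrt (hQ x).ne').deriv

theorem sqrt_add_deriv_deriv_sqrt (hQ : ∀ x, 0 < Q x) (hQ' : ∀ x, HasDerivAt Q (Q' x) x)
    {x : ℝ} (hQ'' : HasDerivAt Q' (Q'' x) x) :
    √(Q x) + deriv (deriv fun x => √(Q x)) x
      = (4 * Q x ^ 2 + 2 * Q x * Q'' x - Q' x ^ 2) / (4 * Q x * √(Q x)) := by
  have hsqrt : 0 < √(Q x) := sqrt_pos.2 (hQ x)
  have hsq : √(Q x) ^ 2 = Q x := sq_sqrt (hQ x).le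
  have hderiv : HasDerivAt (fun x => Q' x / (2 * √(Q x)))
      ((Q'' x * (2 * √(Q x)) - Q' x * (2 * (Q' x / (2 * √(Q x))))) / (2 * √(Q x)) ^ 2) x :=
    hQ''.div (((hQ' x).sqrt (hQ x).ne').const_mul 2) (by positivity)
  rw [deriv_sqrt_eq_of_hasDerivAt hQ hQ', hderiv.deriv]
  have hQx := (hQ x).ne'
  field_simp
  rw [show √(Q x) ^ 4 = (√(Q x) ^ 2) ^ 2 by ring, hsq]
  ring

end SqrtDeriv

noncomputable def circleQuadForm (a b d θ : ℝ) : ℝ :=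
  a * cos θ ^ 2 + 2 * b * cos θ * sin θ + d * sin θ ^ 2

namespace circleQuadForm

variable {a b d : ℝ}

theorem hasDerivAt (a b d θ : ℝ) :
    HasDerivAt (circleQuadForm a b d) (circleQuadForm (2 * b) (d - a) (-2 * b) θ) θ := by
  have h := ((((hasDerivAt_cos θ).pow 2).const_mul a).add
    (((hasDerivAt_cos θ).const_mul (2 * b)).mul (hasDerivAt_sin θ))).add
    (((hasDerivAt_sin θ).pow 2).const_mul d)
  refine h.congr_deriv ?_
  simp only [circleQuadForm]
  ring

theorem pos (ha : 0 < a) (hdet : b ^ 2 < a * d) (θ : ℝ) : 0 < circleQuadForm a b d θ := by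
  rcases eq_or_ne (sin θ) 0 with hs | hs
  · have hsc := sin_sq_add_cos_sq θ
    unfold circleQuadForm
    rw [hs] at hsc ⊢
    nlinarith
  · have hs2 := mul_pos (sub_pos.2 hdet) (sq_pos_of_ne_zero hs)
    have hsum : a * circleQuadForm a b d θ
        = (a * cos θ + b * sin θ) ^ 2 + (a * d - b ^ 2) * sin θ ^ 2 := by
      unfold circleQuadForm; ring
    exact pos_of_mul_pos_right (hsum ▸ by positivity) ha.le

theorem sqrt_add_deriv_deriv_sqrt (ha : 0 < a) (hdet : b ^ 2 < a * d) (θ : ℝ) :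
    √(circleQuadForm a b d θ) + deriv (deriv fun θ => √(circleQuadForm a b d θ)) θ
      = (a * d - b ^ 2) / √(circleQuadForm a b d θ) ^ 3 := by
  have hQ'' : HasDerivAt (circleQuadForm (2 * b) (d - a) (-2 * b))
      (circleQuadForm (2 * (d - a)) (-4 * b) (-2 * (d - a)) θ) θ :=
    (hasDerivAt _ _ _ θ).congr_deriv (by simp only [circleQuadForm]; ring)
  have hident : 4 * circleQuadForm a b d θ ^ 2
      + 2 * circleQuadForm a b d θ * circleQuadForm (2 * (d - a)) (-4 * b) (-2 * (d - a)) θ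
      - circleQuadForm (2 * b) (d - a) (-2 * b) θ ^ 2 = 4 * (a * d - b ^ 2) := by
    unfold circleQuadForm
    linear_combination (4 * (a * d - b ^ 2) * (sin θ ^ 2 + cos θ ^ 2 + 1)) * sin_sq_add_cos_sq θ
  have hQ := pos ha hdet θ
  have hsqrt : 0 < √(circleQuadForm a b d θ) := sqrt_pos.2 hQ
  rw [_root_.sqrt_add_deriv_deriv_sqrt (pos ha hdet) (hasDerivAt a b d) hQ'', hident,
    pow_succ (√_) 2, sq_sqrt hQ.le]
  field_simp

theorem cos_mul_sqrt_sub_sin_mul_deriv_sqrt (ha : 0 < a) (hdet : b ^ 2 < a * d) (θ : ℝ) :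
    cos θ * √(circleQuadForm a b d θ) - sin θ * deriv (fun θ => √(circleQuadForm a b d θ)) θ
      = (a * cos θ + b * sin θ) / √(circleQuadForm a b d θ) := by
  have hQ := pos ha hdet θ
  have hsqrt : 0 < √(circleQuadForm a b d θ) := sqrt_pos.2 hQ
  rw [deriv_sqrt_eq_of_hasDerivAt (pos ha hdet) (hasDerivAt a b d)]
  field_simp
  rw [sq_sqrt hQ.le]
  unfold circleQuadForm
  linear_combination 2 * (a * cos θ + b * sin θ) * sin_sq_add_cos_sq θ

end circleQuadForm

theorem stmt10 (A C : ℝ) (hC : 0 < C)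
    (K₀ K₁ K₂ K₃ : ℝ)
    (hK₃ : K₃ = 1 / C) (hK₂ : K₂ = -(3 * A) / C)
    (hK₁ : K₁ = 3 * A ^ 2 / C + 1) (hK₀ : K₀ = -(A * (A ^ 2 + C)) / C)
    (P : ℝ → ℝ)
    (hP : ∀ θ, P θ = K₃ * cos θ ^ 3 + K₂ * cos θ ^ 2 * sin θ
        + K₁ * cos θ * sin θ ^ 2 + K₀ * sin θ ^ 3)
    (f : ℝ → ℝ)
    (hf : ∀ θ, f θ = Real.sqrt
      (cos θ ^ 2 - 2 * A * cos θ * sin θ + (A ^ 2 + C) * sin θ ^ 2)) :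
    ∀ θ, (f θ + deriv (deriv f) θ) * P θ
        = -sin θ * deriv f θ + cos θ * f θ := by
  have hdet : (-A) ^ 2 < 1 * (A ^ 2 + C) := by linarith
  obtain rfl : f = fun θ => √(circleQuadForm 1 (-A) (A ^ 2 + C) θ) :=
    funext fun θ => by rw [hf, circleQuadForm]; ring_nf
  intro θ
  have hCP : C * P θ = circleQuadForm 1 (-A) (A ^ 2 + C) θ * (cos θ - A * sin θ) := by
    rw [hP, hK₀, hK₁, hK₂, hK₃, circleQuadForm]
    field_simp
    ring
  have hQ := circleQuadForm.pos one_pos hdet θ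
  rw [circleQuadForm.sqrt_add_deriv_deriv_sqrt one_pos hdet, neg_mul, neg_add_eq_sub,
    circleQuadForm.cos_mul_sqrt_sub_sin_mul_deriv_sqrt one_pos hdet]
  have hsqrt : 0 < √(circleQuadForm 1 (-A) (A ^ 2 + C) θ) := sqrt_pos.2 hQ
  field_simp
  rw [sq_sqrt hQ.le]
  linear_combination hCP
end

section
/- Let g_{11}, g_{12}, g_{22} ∈ ℝ with g_{11} > 0 and Δ := g_{11}g_{22} − g_{12}² > 0, and f(θ) = √(g_{11}cos²θ + 2g_{12}cos θ sin θ + g_{22}sin²θ). Then f satisfies the ODE (f + f'')·P = −sin θ·f' + cos θ·f with P(θ) = K₃cos³θ + K₂cos²θ sin θ + K₁cos θ sin²θ + K₀sin³θ if and only if K₃ = g_{11}²/Δ, K₂ = 3g_{11}g_{12}/Δ, K₁ = 3g_{12}²/Δ + 1, K₀ = g_{12}g_{22}/Δ. -/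
/-!
Write `q θ = g₁₁ cos² θ + 2 g₁₂ cos θ sin θ + g₂₂ sin² θ` and `Δ = g₁₁ g₂₂ - g₁₂²`, so `f = √q`.
Differentiating `f² = q` twice gives `f³ (f + f'') = q² + q q''/2 - q'²/4`, and for a quadratic
form this is the constant `Δ`; moreover `-sin θ f' + cos θ f = (g₁₁ cos θ + g₁₂ sin θ) / f`.
Hence the ODE says exactly `Δ P = (g₁₁ cos θ + g₁₂ sin θ) q`, an identity between two binary cubic
forms in `(cos θ, sin θ)`, and two such forms agree on the unit circle only if their coefficients
agree.
-/

open Real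

section SqrtDeriv

variable {Q Q' Q'' : ℝ → ℝ}

theorem deriv_sqrt_comp_eq (hQ : ∀ x, HasDerivAt Q (Q' x) x) (hpos : ∀ x, 0 < Q x) :
    deriv (fun x => √(Q x)) = fun x => Q' x / (2 * √(Q x)) :=
  funext fun x => ((hQ x).sqrt (hpos x).ne').deriv

theorem sqrt_add_deriv_deriv_sqrt_comp (hQ : ∀ x, HasDerivAt Q (Q' x) x)
    (hQ' : ∀ x, HasDerivAt Q' (Q'' x) x) (hpos : ∀ x, 0 < Q x) (x : ℝ) :
    √(Q x) + deriv (deriv fun x => √(Q x)) x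
      = (4 * Q x ^ 2 + 2 * Q x * Q'' x - Q' x ^ 2) / (4 * √(Q x) ^ 3) := by
  have hr : 0 < √(Q x) := sqrt_pos.mpr (hpos x)
  have hr2 : √(Q x) ^ 2 = Q x := sq_sqrt (hpos x).le
  have h2r : 2 * √(Q x) ≠ 0 := by positivity
  have hd : HasDerivAt (fun x => Q' x / (2 * √(Q x)))
      ((Q'' x * (2 * √(Q x)) - Q' x * (2 * (Q' x / (2 * √(Q x))))) / (2 * √(Q x)) ^ 2) x :=
    (hQ' x).div (((hQ x).sqrt (hpos x).ne').const_mul 2) h2r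
  rw [deriv_sqrt_comp_eq hQ hpos, hd.deriv]
  set r := √(Q x)
  rw [← hr2]
  field_simp
  ring

end SqrtDeriv

section QuadForm

variable (a b c : ℝ)

noncomputable def quadForm (θ : ℝ) : ℝ :=
  a * cos θ ^ 2 + 2 * b * cos θ * sin θ + c * sin θ ^ 2

noncomputable def quadFormDeriv (θ : ℝ) : ℝ :=
  2 * (c - a) * cos θ * sin θ + 2 * b * (cos θ ^ 2 - sin θ ^ 2)

noncomputable def quadFormDeriv2 (θ : ℝ) : ℝ :=
  2 * (c - a) * (cos θ ^ 2 - sin θ ^ 2) - 8 * b * cos θ * sin θ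

theorem hasDerivAt_quadForm (θ : ℝ) :
    HasDerivAt (quadForm a b c) (quadFormDeriv a b c θ) θ :=
  ((((hasDerivAt_cos θ).pow 2).const_mul a).add
    (((hasDerivAt_cos θ).const_mul (2 * b)).mul (hasDerivAt_sin θ))).add
    (((hasDerivAt_sin θ).pow 2).const_mul c) |>.congr_deriv (by simp only [quadFormDeriv]; ring)

theorem hasDerivAt_quadFormDeriv (θ : ℝ) :
    HasDerivAt (quadFormDeriv a b c) (quadFormDeriv2 a b c θ) θ :=
  (((hasDerivAt_cos θ).const_mul (2 * (c - a))).mul (hasDerivAt_sin θ)).add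
    ((((hasDerivAt_cos θ).pow 2).sub ((hasDerivAt_sin θ).pow 2)).const_mul (2 * b))
    |>.congr_deriv (by simp only [quadFormDeriv2]; ring)

variable {a b c}

theorem quadForm_pos (ha : 0 < a) (hdet : 0 < a * c - b ^ 2) (θ : ℝ) :
    0 < quadForm a b c θ := by
  have hθ := sin_sq_add_cos_sq θ
  -- `a q = (a cos θ + b sin θ)² + (a c - b²) sin² θ`
  rcases eq_or_ne (sin θ) 0 with hs | hs
  · simp only [quadForm, hs] at hθ ⊢
    nlinarith
  · have : 0 < sin θ ^ 2 := by positivity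
    have : 0 < a * quadForm a b c θ := by
      simp only [quadForm]
      nlinarith [sq_nonneg (a * cos θ + b * sin θ), mul_pos hdet this]
    exact pos_of_mul_pos_right this ha.le

variable (a b c)

theorem quadForm_curvature_identity (θ : ℝ) :
    4 * quadForm a b c θ ^ 2 + 2 * quadForm a b c θ * quadFormDeriv2 a b c θ
      - quadFormDeriv a b c θ ^ 2 = 4 * (a * c - b ^ 2) := by
  simp only [quadForm, quadFormDeriv, quadFormDeriv2]
  linear_combination (4 * (a * c - b ^ 2) * (cos θ ^ 2 + sin θ ^ 2 + 1)) * sin_sq_add_cos_sq θ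

end QuadForm

section QuadFormODE

variable {a b c : ℝ}

theorem sqrt_quadForm_add_deriv_deriv (ha : 0 < a) (hdet : 0 < a * c - b ^ 2) (θ : ℝ) :
    √(quadForm a b c θ) + deriv (deriv fun x => √(quadForm a b c x)) θ
      = (a * c - b ^ 2) / √(quadForm a b c θ) ^ 3 := by
  rw [sqrt_add_deriv_deriv_sqrt_comp (hasDerivAt_quadForm a b c) (hasDerivAt_quadFormDeriv a b c)
    (quadForm_pos ha hdet), quadForm_curvature_identity]
  ring

theorem neg_sin_mul_deriv_sqrt_quadForm_add (ha : 0 < a) (hdet : 0 < a * c - b ^ 2) (θ : ℝ) :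
    -sin θ * deriv (fun x => √(quadForm a b c x)) θ + cos θ * √(quadForm a b c θ)
      = (a * cos θ + b * sin θ) / √(quadForm a b c θ) := by
  have hq := quadForm_pos ha hdet θ
  rw [deriv_sqrt_comp_eq (hasDerivAt_quadForm a b c) (quadForm_pos ha hdet)]
  field_simp
  rw [sq_sqrt hq.le]
  simp only [quadForm, quadFormDeriv]
  linear_combination (2 * (a * cos θ + b * sin θ)) * sin_sq_add_cos_sq θ

theorem ode_sqrt_quadForm_iff (ha : 0 < a) (hdet : 0 < a * c - b ^ 2) (K₀ K₁ K₂ K₃ θ : ℝ) :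
    (√(quadForm a b c θ) + deriv (deriv fun x => √(quadForm a b c x)) θ)
        * (K₃ * cos θ ^ 3 + K₂ * cos θ ^ 2 * sin θ + K₁ * cos θ * sin θ ^ 2 + K₀ * sin θ ^ 3)
      = -sin θ * deriv (fun x => √(quadForm a b c x)) θ + cos θ * √(quadForm a b c θ) ↔
    ((a * c - b ^ 2) * K₃ - a ^ 2) * cos θ ^ 3
      + ((a * c - b ^ 2) * K₂ - 3 * a * b) * cos θ ^ 2 * sin θ
      + ((a * c - b ^ 2) * K₁ - (a * c + 2 * b ^ 2)) * cos θ * sin θ ^ 2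
      + ((a * c - b ^ 2) * K₀ - b * c) * sin θ ^ 3 = 0 := by
  have hq := quadForm_pos ha hdet θ
  have hr : 0 < √(quadForm a b c θ) := sqrt_pos.mpr hq
  rw [sqrt_quadForm_add_deriv_deriv ha hdet, neg_sin_mul_deriv_sqrt_quadForm_add ha hdet,
    div_mul_eq_mul_div, div_eq_div_iff (by positivity) hr.ne', ← sub_eq_zero]
  set r := √(quadForm a b c θ)
  have hr2 : r ^ 2 = quadForm a b c θ := sq_sqrt hq.le
  refine (Eq.congr_left ?_).trans (mul_eq_zero_iff_right hr.ne')
  simp only [quadForm] at hr2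
  linear_combination (-(a * cos θ + b * sin θ) * r) * hr2

end QuadFormODE

theorem cubic_cos_sin_eq_zero_iff {c₃ c₂ c₁ c₀ : ℝ} :
    (∀ θ, c₃ * cos θ ^ 3 + c₂ * cos θ ^ 2 * sin θ + c₁ * cos θ * sin θ ^ 2 + c₀ * sin θ ^ 3 = 0) ↔
      c₃ = 0 ∧ c₂ = 0 ∧ c₁ = 0 ∧ c₀ = 0 := by
  refine ⟨fun h => ?_, ?_⟩
  · have h₀ := h 0
    have h₁ := h (π / 2)
    have hp := h (π / 4)
    have hm := h (-(π / 4))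
    simp only [cos_zero, sin_zero, cos_pi_div_two, sin_pi_div_two, cos_neg, sin_neg,
      cos_pi_div_four, sin_pi_div_four] at h₀ h₁ hp hm
    have hs : (√2 / 2) ^ 3 ≠ 0 := by positivity
    have hp' : c₃ + c₂ + c₁ + c₀ = 0 := by
      refine (mul_eq_zero.mp ?_).resolve_right hs
      linear_combination hp
    have hm' : c₃ - c₂ + c₁ - c₀ = 0 := by
      refine (mul_eq_zero.mp ?_).resolve_right hs
      linear_combination hm
    norm_num at h₀ h₁
    refine ⟨?_, ?_, ?_, ?_⟩ <;> linarith
  · rintro ⟨rfl, rfl, rfl, rfl⟩ θ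
    ring

theorem stmt11 (g₁₁ g₁₂ g₂₂ : ℝ) (h11 : 0 < g₁₁) (hdet : 0 < g₁₁ * g₂₂ - g₁₂ ^ 2)
    (f : ℝ → ℝ)
    (hf : ∀ θ, f θ = Real.sqrt
      (g₁₁ * cos θ ^ 2 + 2 * g₁₂ * cos θ * sin θ + g₂₂ * sin θ ^ 2))
    (K₀ K₁ K₂ K₃ : ℝ) :
    (∀ θ, (f θ + deriv (deriv f) θ)
          * (K₃ * cos θ ^ 3 + K₂ * cos θ ^ 2 * sin θ
            + K₁ * cos θ * sin θ ^ 2 + K₀ * sin θ ^ 3)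
        = -sin θ * deriv f θ + cos θ * f θ)
      ↔ (K₃ = g₁₁ ^ 2 / (g₁₁ * g₂₂ - g₁₂ ^ 2) ∧
         K₂ = 3 * g₁₁ * g₁₂ / (g₁₁ * g₂₂ - g₁₂ ^ 2) ∧
         K₁ = 3 * g₁₂ ^ 2 / (g₁₁ * g₂₂ - g₁₂ ^ 2) + 1 ∧
         K₀ = g₁₂ * g₂₂ / (g₁₁ * g₂₂ - g₁₂ ^ 2)) := by
  obtain rfl : f = fun θ => √(quadForm g₁₁ g₁₂ g₂₂ θ) := funext hf
  have hK : ∀ K x : ℝ, (g₁₁ * g₂₂ - g₁₂ ^ 2) * K - x = 0 ↔ K = x / (g₁₁ * g₂₂ - g₁₂ ^ 2) :=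
    fun K x => by rw [sub_eq_zero, eq_div_iff hdet.ne', mul_comm]
  have hK₁ : 3 * g₁₂ ^ 2 / (g₁₁ * g₂₂ - g₁₂ ^ 2) + 1
      = (g₁₁ * g₂₂ + 2 * g₁₂ ^ 2) / (g₁₁ * g₂₂ - g₁₂ ^ 2) := by
    field_simp
    ring
  simp only [ode_sqrt_quadForm_iff h11 hdet, cubic_cos_sin_eq_zero_iff, hK, hK₁]
end

section
/- Suppose a positively 1-homogeneous function F : ℝⁿ\{0} → ℝ (smooth) satisfies for all k: F_{y^k y^i}Γ^i − F_{y^i}T^i_k = 0, where Γ^i(y) = Γ^i_{jk}y^jy^k for symmetric coefficients Γ^i_{jk} and T^i_k(y) = T^i_{km}y^m with T^i_{km} = −T^i_{mk}. Then for all pairs k < s: F_{y^ky^i}(2Γ^i_s + T^i_s) − F_{y^sy^i}(2Γ^i_k + T^i_k) − 2F_{y^i}T^i_{ks} = 0, where Γ^i_s = Γ^i_{sm}y^m. Conversely, contracting the second system with y^s recovers the first (using Euler's relations F_{y^i}y^i = F and F_{y^ky^i}y^i = 0). -/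
open Real

/-- First partial derivative `F_{y^i}`. -/
noncomputable def pd {n : ℕ} (F : (Fin n → ℝ) → ℝ) (y : Fin n → ℝ) (i : Fin n) : ℝ :=
  fderiv ℝ F y (Pi.single i 1)

/-- Second partial derivative `F_{y^i y^j}`. -/
noncomputable def pd2 {n : ℕ} (F : (Fin n → ℝ) → ℝ) (y : Fin n → ℝ) (i j : Fin n) : ℝ :=
  fderiv ℝ (fun z => fderiv ℝ F z (Pi.single i 1)) y (Pi.single j 1)

namespace S15Aux

open Filter Topology

variable {n : ℕ} {F : (Fin n → ℝ) → ℝ}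

lemma U_open : IsOpen {y : Fin n → ℝ | y ≠ 0} := isOpen_ne

lemma smooth1 (hF : ContDiffOn ℝ (⊤ : ℕ∞) F {y : Fin n → ℝ | y ≠ 0}) :
    ContDiffOn ℝ (⊤ : ℕ∞) (fun z => fderiv ℝ F z) {y : Fin n → ℝ | y ≠ 0} :=
  hF.fderiv_of_isOpen U_open (by simp)

lemma smoothHk (hF : ContDiffOn ℝ (⊤ : ℕ∞) F {y : Fin n → ℝ | y ≠ 0}) (k : Fin n) :
    ContDiffOn ℝ (⊤ : ℕ∞) (fun z => fderiv ℝ F z (Pi.single k 1)) {y : Fin n → ℝ | y ≠ 0} :=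
  (smooth1 hF).clm_apply contDiffOn_const

lemma smoothPd2 (hF : ContDiffOn ℝ (⊤ : ℕ∞) F {y : Fin n → ℝ | y ≠ 0}) (k i : Fin n) :
    ContDiffOn ℝ (⊤ : ℕ∞) (fun z => pd2 F z k i) {y : Fin n → ℝ | y ≠ 0} :=
  ((smoothHk hF k).fderiv_of_isOpen U_open (by simp)).clm_apply contDiffOn_const

lemma diffAt {f : (Fin n → ℝ) → ℝ} {y : Fin n → ℝ}
    (h : ContDiffOn ℝ (⊤ : ℕ∞) f {y : Fin n → ℝ | y ≠ 0}) (hy : y ≠ 0) :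
    DifferentiableAt ℝ f y :=
  ((h.contDiffAt (U_open.mem_nhds hy)).differentiableAt (by simp))

lemma diffAtC {f : (Fin n → ℝ) → ((Fin n → ℝ) →L[ℝ] ℝ)} {y : Fin n → ℝ}
    (h : ContDiffOn ℝ (⊤ : ℕ∞) f {y : Fin n → ℝ | y ≠ 0}) (hy : y ≠ 0) :
    DifferentiableAt ℝ f y :=
  ((h.contDiffAt (U_open.mem_nhds hy)).differentiableAt (by simp))

lemma dpd2 (hF : ContDiffOn ℝ (⊤ : ℕ∞) F {y : Fin n → ℝ | y ≠ 0})
    {y : Fin n → ℝ} (hy : y ≠ 0) (k i : Fin n) :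
    DifferentiableAt ℝ (fun z => pd2 F z k i) y :=
  diffAt (smoothPd2 hF k i) hy

lemma dpd (hF : ContDiffOn ℝ (⊤ : ℕ∞) F {y : Fin n → ℝ | y ≠ 0})
    {y : Fin n → ℝ} (hy : y ≠ 0) (i : Fin n) :
    DifferentiableAt ℝ (fun z => pd F z i) y :=
  diffAt (smoothHk hF i) hy

lemma key_apply {f : (Fin n → ℝ) → ((Fin n → ℝ) →L[ℝ] ℝ)} {y : Fin n → ℝ}
    (hf : DifferentiableAt ℝ f y) (v w : Fin n → ℝ) :
    fderiv ℝ (fun z => f z v) y w = fderiv ℝ f y w v := by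
  have h1 : HasFDerivAt (fun z => f z v)
      ((ContinuousLinearMap.apply ℝ ℝ v).comp (fderiv ℝ f y)) y :=
    ((ContinuousLinearMap.apply ℝ ℝ v).hasFDerivAt).comp y hf.hasFDerivAt
  rw [h1.fderiv]; rfl

lemma sym2 (hF : ContDiffOn ℝ (⊤ : ℕ∞) F {y : Fin n → ℝ | y ≠ 0}) {y : Fin n → ℝ} (hy : y ≠ 0)
    (k i : Fin n) : pd2 F y k i = pd2 F y i k := by
  have hdf : DifferentiableAt ℝ (fderiv ℝ F) y := diffAtC (smooth1 hF) hy
  have hsym := (hF.contDiffAt (U_open.mem_nhds hy)).isSymmSndFDerivAt (by rw [minSmoothness_of_isRCLikeNormedField]; exact WithTop.coe_le_coe.mpr le_top)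
  have key : ∀ a b : Fin n, pd2 F y a b
      = fderiv ℝ (fderiv ℝ F) y (Pi.single b 1) (Pi.single a 1) := fun a b =>
    key_apply hdf _ _
  rw [key k i, key i k, hsym]

lemma sym3 (hF : ContDiffOn ℝ (⊤ : ℕ∞) F {y : Fin n → ℝ | y ≠ 0}) {y : Fin n → ℝ} (hy : y ≠ 0)
    (k i s : Fin n) :
    fderiv ℝ (fun z => pd2 F z k i) y (Pi.single s 1)
      = fderiv ℝ (fun z => pd2 F z s i) y (Pi.single k 1) := by
  have hdH : ∀ a : Fin n,
      DifferentiableAt ℝ (fderiv ℝ (fun z => fderiv ℝ F z (Pi.single a 1))) y := fun a =>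
    diffAtC ((smoothHk hF a).fderiv_of_isOpen U_open (by simp)) hy
  have symH : ∀ a : Fin n,
      IsSymmSndFDerivAt ℝ (fun z => fderiv ℝ F z (Pi.single a 1)) y := fun a =>
    ((smoothHk hF a).contDiffAt (U_open.mem_nhds hy)).isSymmSndFDerivAt (by rw [minSmoothness_of_isRCLikeNormedField]; exact WithTop.coe_le_coe.mpr le_top)
  have key2 : ∀ a b c : Fin n, fderiv ℝ (fun z => pd2 F z a b) y (Pi.single c 1)
      = fderiv ℝ (fderiv ℝ (fun z => fderiv ℝ F z (Pi.single a 1))) y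
          (Pi.single c 1) (Pi.single b 1) := by
    intro a b c
    exact key_apply (hdH a) _ _
  have hswap : fderiv ℝ (fun z => pd2 F z k s) y = fderiv ℝ (fun z => pd2 F z s k) y := by
    apply Filter.EventuallyEq.fderiv_eq
    filter_upwards [U_open.mem_nhds hy] with z hz
    exact sym2 hF hz k s
  calc fderiv ℝ (fun z => pd2 F z k i) y (Pi.single s 1)
      = fderiv ℝ (fderiv ℝ (fun z => fderiv ℝ F z (Pi.single k 1))) y
          (Pi.single s 1) (Pi.single i 1) := key2 k i s
    _ = fderiv ℝ (fderiv ℝ (fun z => fderiv ℝ F z (Pi.single k 1))) y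
          (Pi.single i 1) (Pi.single s 1) := symH k _ _
    _ = fderiv ℝ (fun z => pd2 F z k s) y (Pi.single i 1) := (key2 k s i).symm
    _ = fderiv ℝ (fun z => pd2 F z s k) y (Pi.single i 1) := by rw [hswap]
    _ = fderiv ℝ (fderiv ℝ (fun z => fderiv ℝ F z (Pi.single s 1))) y
          (Pi.single i 1) (Pi.single k 1) := key2 s k i
    _ = fderiv ℝ (fderiv ℝ (fun z => fderiv ℝ F z (Pi.single s 1))) y
          (Pi.single k 1) (Pi.single i 1) := symH s _ _
    _ = fderiv ℝ (fun z => pd2 F z s i) y (Pi.single k 1) := (key2 s i k).symm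

lemma fderiv_hom (hF : ContDiffOn ℝ (⊤ : ℕ∞) F {y : Fin n → ℝ | y ≠ 0})
    (hhom : ∀ c : ℝ, 0 < c → ∀ y : Fin n → ℝ, F (c • y) = c * F y)
    {y : Fin n → ℝ} (hy : y ≠ 0) {c : ℝ} (hc : 0 < c) :
    fderiv ℝ F (c • y) = fderiv ℝ F y := by
  have hcy : c • y ≠ 0 := smul_ne_zero (ne_of_gt hc) hy
  have hdF : DifferentiableAt ℝ F (c • y) :=
    ((hF.contDiffAt (U_open.mem_nhds hcy)).differentiableAt (by simp))
  have hdFy : DifferentiableAt ℝ F y :=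
    ((hF.contDiffAt (U_open.mem_nhds hy)).differentiableAt (by simp))
  have hsc : HasFDerivAt (fun z : Fin n → ℝ => c • z)
      (c • (ContinuousLinearMap.id ℝ (Fin n → ℝ))) y :=
    (hasFDerivAt_id y).const_smul c
  have h1 : HasFDerivAt (fun z : Fin n → ℝ => F (c • z))
      ((fderiv ℝ F (c • y)).comp (c • (ContinuousLinearMap.id ℝ (Fin n → ℝ)))) y :=
    hdF.hasFDerivAt.comp y hsc
  have h2 : HasFDerivAt (fun z : Fin n → ℝ => F (c • z)) (c • fderiv ℝ F y) y := by
    have : (fun z : Fin n → ℝ => F (c • z)) = fun z => c * F z := by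
      funext z; exact hhom c hc z
    rw [this]
    exact hdFy.hasFDerivAt.const_mul c
  have h3 := h1.unique h2
  ext v
  have := congrArg (fun L => L v) h3
  simp only [ContinuousLinearMap.comp_apply, ContinuousLinearMap.smul_apply,
    ContinuousLinearMap.coe_id', id_eq, ContinuousLinearMap.coe_smul', Pi.smul_apply] at this
  have hc0 : c ≠ 0 := ne_of_gt hc
  rw [map_smul] at this
  simp only [smul_eq_mul, mul_eq_mul_left_iff] at this
  rcases this with h | h
  · exact h
  · exact absurd h hc0

lemma eul2 (hF : ContDiffOn ℝ (⊤ : ℕ∞) F {y : Fin n → ℝ | y ≠ 0})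
    (hhom : ∀ c : ℝ, 0 < c → ∀ y : Fin n → ℝ, F (c • y) = c * F y)
    {y : Fin n → ℝ} (hy : y ≠ 0) (i : Fin n) :
    ∑ s, pd2 F y i s * y s = 0 := by
  set G : (Fin n → ℝ) → ℝ := fun z => fderiv ℝ F z (Pi.single i 1) with hG
  have hdG : DifferentiableAt ℝ G y := diffAt (smoothHk hF i) hy
  have hψ : HasDerivAt (fun t : ℝ => G (t • y)) (fderiv ℝ G y y) 1 := by
    have hline : HasDerivAt (fun t : ℝ => t • y) y 1 := by
      simpa using (hasDerivAt_id (1:ℝ)).smul_const y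
    have hdG' : HasFDerivAt G (fderiv ℝ G y) ((1:ℝ) • y) := by
      rw [one_smul]; exact hdG.hasFDerivAt
    have h' := hdG'.comp_hasDerivAt 1 hline
    exact h'
  have hconst : (fun t : ℝ => G (t • y)) =ᶠ[𝓝 (1:ℝ)] fun _ => G y := by
    filter_upwards [eventually_gt_nhds (show (0:ℝ) < 1 by norm_num)] with t ht
    simp only [hG]
    rw [fderiv_hom hF hhom hy ht]
  have hψ0 : HasDerivAt (fun t : ℝ => G (t • y)) 0 1 :=
    HasDerivAt.congr_of_eventuallyEq (hasDerivAt_const 1 (G y)) hconst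
  have h0 : fderiv ℝ G y y = 0 := hψ.unique hψ0
  have hyrepr : y = ∑ s, y s • (Pi.single s (1:ℝ) : Fin n → ℝ) := by
    funext j
    simp [Pi.single_apply, Finset.sum_apply]
  calc ∑ s, pd2 F y i s * y s = ∑ s, y s • fderiv ℝ G y (Pi.single s 1) := by
        apply Finset.sum_congr rfl; intro s _
        simp [pd2, hG, smul_eq_mul, mul_comm]
    _ = fderiv ℝ G y (∑ s, y s • (Pi.single s (1:ℝ) : Fin n → ℝ)) := by
        rw [map_sum]; simp
    _ = fderiv ℝ G y y := by rw [← hyrepr]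
    _ = 0 := h0

lemma lemD (hF : ContDiffOn ℝ (⊤ : ℕ∞) F {y : Fin n → ℝ | y ≠ 0})
    {Γ T : Fin n → Fin n → Fin n → ℝ}
    (hΓ : ∀ i j k, Γ i j k = Γ i k j)
    (hsys : ∀ y : Fin n → ℝ, y ≠ 0 → ∀ k : Fin n,
        (∑ i, pd2 F y k i * (∑ j, ∑ m, Γ i j m * y j * y m))
          - (∑ i, pd F y i * (∑ m, T i k m * y m)) = 0)
    {y : Fin n → ℝ} (hy : y ≠ 0) (k s : Fin n) :
    (∑ i, fderiv ℝ (fun z => pd2 F z k i) y (Pi.single s 1) * (∑ j, ∑ m, Γ i j m * y j * y m))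
      + (∑ i, pd2 F y k i * (2 * ∑ m, Γ i s m * y m))
      - (∑ i, pd2 F y i s * (∑ m, T i k m * y m))
      - (∑ i, pd F y i * T i k s) = 0 := by
  have hder : HasFDerivAt
      (fun z => (∑ i, pd2 F z k i * (∑ j, ∑ m, Γ i j m * z j * z m))
        - (∑ i, pd F z i * (∑ m, T i k m * z m)))
      ((∑ i, (pd2 F y k i • (∑ j, ∑ m, ((Γ i j m * y j) •
              (ContinuousLinearMap.proj m : (Fin n → ℝ) →L[ℝ] ℝ)
            + y m • (Γ i j m • (ContinuousLinearMap.proj j : (Fin n → ℝ) →L[ℝ] ℝ))))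
          + (∑ j, ∑ m, Γ i j m * y j * y m) • fderiv ℝ (fun z => pd2 F z k i) y))
        - (∑ i, (pd F y i • (∑ m, T i k m •
              (ContinuousLinearMap.proj m : (Fin n → ℝ) →L[ℝ] ℝ))
          + (∑ m, T i k m * y m) • fderiv ℝ (fun z => pd F z i) y))) y := by
    apply HasFDerivAt.sub
    · apply HasFDerivAt.fun_sum
      intro i _
      exact (dpd2 hF hy k i).hasFDerivAt.mul
        (HasFDerivAt.fun_sum fun j _ => HasFDerivAt.fun_sum fun m _ =>
          (((ContinuousLinearMap.proj j (R := ℝ) (φ := fun _ : Fin n => ℝ)).hasFDerivAt).const_mul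
            (Γ i j m)).mul
            ((ContinuousLinearMap.proj m (R := ℝ) (φ := fun _ : Fin n => ℝ)).hasFDerivAt))
    · apply HasFDerivAt.fun_sum
      intro i _
      exact (dpd hF hy i).hasFDerivAt.mul
        (HasFDerivAt.fun_sum fun m _ =>
          ((ContinuousLinearMap.proj m (R := ℝ) (φ := fun _ : Fin n => ℝ)).hasFDerivAt).const_mul
            (T i k m))
  have hev : (fun z => (∑ i, pd2 F z k i * (∑ j, ∑ m, Γ i j m * z j * z m))
        - (∑ i, pd F z i * (∑ m, T i k m * z m))) =ᶠ[𝓝 y] (fun _ => (0:ℝ)) := by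
    filter_upwards [U_open.mem_nhds hy] with z hz using hsys z hz k
  have h0 : fderiv ℝ (fun z => (∑ i, pd2 F z k i * (∑ j, ∑ m, Γ i j m * z j * z m))
        - (∑ i, pd F z i * (∑ m, T i k m * z m))) y = 0 := by
    rw [hev.fderiv_eq]; exact fderiv_const_apply 0
  have hD0 := hder.fderiv.symm.trans h0
  have hval := congrArg (fun L => L (Pi.single s 1)) hD0
  simp only [ContinuousLinearMap.sub_apply, ContinuousLinearMap.add_apply,
    ContinuousLinearMap.coe_sum', Finset.sum_apply, ContinuousLinearMap.smul_apply,
    ContinuousLinearMap.proj_apply, ContinuousLinearMap.zero_apply, smul_eq_mul,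
    Pi.single_apply, mul_ite, mul_one, mul_zero, ite_mul, zero_mul,
    Finset.sum_ite_eq', Finset.mem_univ, if_true] at hval
  have hpdfd : ∀ x : Fin n, fderiv ℝ (fun z => pd F z x) y (Pi.single s 1) = pd2 F y x s :=
    fun x => rfl
  simp only [hpdfd] at hval
  have hQ : ∀ i : Fin n, (∑ x1 : Fin n, ∑ x2 : Fin n,
      ((if x2 = s then Γ i x1 x2 * y x1 else 0) + if x1 = s then y x2 * Γ i x1 x2 else 0))
      = 2 * ∑ m, Γ i s m * y m := by
    intro i
    have hA : (∑ x1 : Fin n, Γ i x1 s * y x1) = ∑ m, Γ i s m * y m :=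
      Finset.sum_congr rfl fun m _ => by rw [hΓ i m s]
    have hB : (∑ x2 : Fin n, y x2 * Γ i s x2) = ∑ m, Γ i s m * y m :=
      Finset.sum_congr rfl fun m _ => mul_comm _ _
    calc (∑ x1 : Fin n, ∑ x2 : Fin n,
        ((if x2 = s then Γ i x1 x2 * y x1 else 0) + if x1 = s then y x2 * Γ i x1 x2 else 0))
        = (∑ x1 : Fin n, Γ i x1 s * y x1) + ∑ x2 : Fin n, y x2 * Γ i s x2 := by
          simp [Finset.sum_add_distrib, Finset.sum_ite_eq', Finset.sum_ite_irrel]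
      _ = 2 * ∑ m, Γ i s m * y m := by rw [hA, hB]; ring
  simp only [hQ] at hval
  have e1 : ∑ x : Fin n, (pd2 F y k x * (2 * ∑ m, Γ x s m * y m)
        + (∑ j, ∑ m, Γ x j m * y j * y m) * fderiv ℝ (fun z => pd2 F z k x) y (Pi.single s 1))
      = (∑ x, pd2 F y k x * (2 * ∑ m, Γ x s m * y m))
        + ∑ x, fderiv ℝ (fun z => pd2 F z k x) y (Pi.single s 1)
            * (∑ j, ∑ m, Γ x j m * y j * y m) := by
    rw [Finset.sum_add_distrib]; congr 1; exact Finset.sum_congr rfl fun i _ => mul_comm _ _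
  have e2 : ∑ x : Fin n, (pd F y x * T x k s + (∑ m, T x k m * y m) * pd2 F y x s)
      = (∑ x, pd F y x * T x k s) + ∑ x, pd2 F y x s * (∑ m, T x k m * y m) := by
    rw [Finset.sum_add_distrib]; congr 1; exact Finset.sum_congr rfl fun i _ => mul_comm _ _
  rw [e1, e2] at hval
  linear_combination hval

lemma hTas {y : Fin n → ℝ} {T : Fin n → Fin n → Fin n → ℝ}
    (hT : ∀ i j k, T i j k = -T i k j) (i : Fin n) :
    ∑ s : Fin n, (∑ m, T i s m * y m) * y s = 0 := by
  have h1 : ∑ s : Fin n, (∑ m, T i s m * y m) * y s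
      = ∑ s : Fin n, ∑ m : Fin n, T i s m * y m * y s :=
    Finset.sum_congr rfl fun s _ => Finset.sum_mul ..
  have h2 : ∑ s : Fin n, ∑ m : Fin n, T i s m * y m * y s
      = -∑ s : Fin n, ∑ m : Fin n, T i s m * y m * y s := by
    calc ∑ s : Fin n, ∑ m : Fin n, T i s m * y m * y s
        = ∑ a : Fin n, ∑ b : Fin n, T i b a * y a * y b := Finset.sum_comm
      _ = ∑ a : Fin n, ∑ b : Fin n, -(T i a b * y b * y a) := by
          refine Finset.sum_congr rfl fun a _ => Finset.sum_congr rfl fun b _ => ?_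
          rw [hT i b a]; ring
      _ = -∑ s : Fin n, ∑ m : Fin n, T i s m * y m * y s := by
          simp [Finset.sum_neg_distrib]
  rw [h1]; linarith

end S15Aux

open S15Aux

theorem stmt15 (n : ℕ) (F : (Fin n → ℝ) → ℝ)
    (hhom : ∀ c : ℝ, 0 < c → ∀ y : Fin n → ℝ, F (c • y) = c * F y)
    (hFsmooth : ContDiffOn ℝ (⊤ : ℕ∞) F {y : Fin n → ℝ | y ≠ 0})
    (Γ : Fin n → Fin n → Fin n → ℝ) (hΓ : ∀ i j k, Γ i j k = Γ i k j)
    (T : Fin n → Fin n → Fin n → ℝ) (hT : ∀ i j k, T i j k = -T i k j) :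
    (∀ y : Fin n → ℝ, y ≠ 0 → ∀ k : Fin n,
        (∑ i, pd2 F y k i * (∑ j, ∑ m, Γ i j m * y j * y m))
          - (∑ i, pd F y i * (∑ m, T i k m * y m)) = 0)
      ↔ (∀ y : Fin n → ℝ, y ≠ 0 → ∀ k s : Fin n, k < s →
        (∑ i, pd2 F y k i * (2 * (∑ m, Γ i s m * y m) + (∑ m, T i s m * y m)))
          - (∑ i, pd2 F y s i * (2 * (∑ m, Γ i k m * y m) + (∑ m, T i k m * y m)))
          - 2 * (∑ i, pd F y i * T i k s) = 0) := by
  constructor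
  · intro hsys y hy k s _
    have h1 := lemD hFsmooth hΓ hsys hy k s
    have h2 := lemD hFsmooth hΓ hsys hy s k
    have q1 : (∑ i, fderiv ℝ (fun z => pd2 F z s i) y (Pi.single k 1)
          * (∑ j, ∑ m, Γ i j m * y j * y m))
        = ∑ i, fderiv ℝ (fun z => pd2 F z k i) y (Pi.single s 1)
          * (∑ j, ∑ m, Γ i j m * y j * y m) :=
      Finset.sum_congr rfl fun i _ => by rw [sym3 hFsmooth hy k i s]
    have q2 : (∑ i, pd2 F y i k * (∑ m, T i s m * y m))
        = ∑ i, pd2 F y k i * (∑ m, T i s m * y m) :=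
      Finset.sum_congr rfl fun i _ => by rw [sym2 hFsmooth hy i k]
    have q3 : (∑ i, pd2 F y i s * (∑ m, T i k m * y m))
        = ∑ i, pd2 F y s i * (∑ m, T i k m * y m) :=
      Finset.sum_congr rfl fun i _ => by rw [sym2 hFsmooth hy i s]
    have q4 : (∑ i, pd F y i * T i s k) = -∑ i, pd F y i * T i k s := by
      rw [← Finset.sum_neg_distrib]
      exact Finset.sum_congr rfl fun i _ => by rw [hT i s k]; ring
    have g1 : (∑ i, pd2 F y k i * (2 * (∑ m, Γ i s m * y m) + (∑ m, T i s m * y m)))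
        = (∑ i, pd2 F y k i * (2 * ∑ m, Γ i s m * y m))
          + ∑ i, pd2 F y k i * (∑ m, T i s m * y m) := by
      rw [← Finset.sum_add_distrib]
      exact Finset.sum_congr rfl fun i _ => by ring
    have g2 : (∑ i, pd2 F y s i * (2 * (∑ m, Γ i k m * y m) + (∑ m, T i k m * y m)))
        = (∑ i, pd2 F y s i * (2 * ∑ m, Γ i k m * y m))
          + ∑ i, pd2 F y s i * (∑ m, T i k m * y m) := by
      rw [← Finset.sum_add_distrib]
      exact Finset.sum_congr rfl fun i _ => by ring
    linear_combination h1 - h2 + q1 - q2 + q3 - q4 + g1 - g2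
  · intro hsys2 y hy k
    have hE : ∀ a b : Fin n,
        (∑ i, pd2 F y a i * (2 * (∑ m, Γ i b m * y m) + (∑ m, T i b m * y m)))
          - (∑ i, pd2 F y b i * (2 * (∑ m, Γ i a m * y m) + (∑ m, T i a m * y m)))
          - 2 * (∑ i, pd F y i * T i a b) = 0 := by
      intro a b
      rcases lt_trichotomy a b with h|h|h
      · exact hsys2 y hy a b h
      · subst h
        have ht0 : ∀ i, T i a a = (0:ℝ) := fun i => by have := hT i a a; linarith
        simp [ht0]
      · have h2 := hsys2 y hy b a h
        have q : (∑ i, pd F y i * T i b a) = -∑ i, pd F y i * T i a b := by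
          rw [← Finset.sum_neg_distrib]
          exact Finset.sum_congr rfl fun i _ => by rw [hT i b a]; ring
        linear_combination -h2 - 2*q
    have hcontr : ∑ s : Fin n,
        ((∑ i, pd2 F y k i * (2 * (∑ m, Γ i s m * y m) + (∑ m, T i s m * y m)))
          - (∑ i, pd2 F y s i * (2 * (∑ m, Γ i k m * y m) + (∑ m, T i k m * y m)))
          - 2 * (∑ i, pd F y i * T i k s)) * y s = 0 :=
      Finset.sum_eq_zero fun s _ => by rw [hE k s, zero_mul]
    have hlin : ∀ (c : ℝ) (A B : Fin n → ℝ),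
        ∑ s, c * (2 * A s + B s) * y s
          = c * (2 * ∑ s, A s * y s) + c * ∑ s, B s * y s := by
      intro c A B
      calc ∑ s, c * (2 * A s + B s) * y s
          = ∑ s, ((c * 2) * (A s * y s) + c * (B s * y s)) :=
            Finset.sum_congr rfl fun s _ => by ring
        _ = (c * 2) * (∑ s, A s * y s) + c * ∑ s, B s * y s := by
            rw [Finset.sum_add_distrib, ← Finset.mul_sum, ← Finset.mul_sum]
        _ = c * (2 * ∑ s, A s * y s) + c * ∑ s, B s * y s := by ring
    have hGam : ∀ i : Fin n, ∑ s : Fin n, (∑ m, Γ i s m * y m) * y s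
        = ∑ j, ∑ m, Γ i j m * y j * y m := by
      intro i
      calc ∑ s : Fin n, (∑ m, Γ i s m * y m) * y s
          = ∑ s : Fin n, ∑ m : Fin n, Γ i s m * y m * y s :=
            Finset.sum_congr rfl fun s _ => Finset.sum_mul ..
        _ = ∑ j, ∑ m, Γ i j m * y j * y m :=
            Finset.sum_congr rfl fun j _ => Finset.sum_congr rfl fun m _ => by ring
    have heul : ∀ i : Fin n, ∑ s : Fin n, pd2 F y s i * y s = 0 := by
      intro i
      rw [show (∑ s : Fin n, pd2 F y s i * y s) = ∑ s : Fin n, pd2 F y i s * y s from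
        Finset.sum_congr rfl fun s _ => by rw [sym2 hFsmooth hy s i]]
      exact eul2 hFsmooth hhom hy i
    have c1 : ∑ s : Fin n,
        (∑ i, pd2 F y k i * (2 * (∑ m, Γ i s m * y m) + (∑ m, T i s m * y m))) * y s
        = 2 * ∑ i, pd2 F y k i * (∑ j, ∑ m, Γ i j m * y j * y m) := by
      calc ∑ s : Fin n,
          (∑ i, pd2 F y k i * (2 * (∑ m, Γ i s m * y m) + (∑ m, T i s m * y m))) * y s
          = ∑ s : Fin n, ∑ i : Fin n,
              pd2 F y k i * (2 * (∑ m, Γ i s m * y m) + (∑ m, T i s m * y m)) * y s :=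
            Finset.sum_congr rfl fun s _ => Finset.sum_mul ..
        _ = ∑ i : Fin n, ∑ s : Fin n,
              pd2 F y k i * (2 * (∑ m, Γ i s m * y m) + (∑ m, T i s m * y m)) * y s :=
            Finset.sum_comm
        _ = ∑ i : Fin n, (pd2 F y k i * (2 * ∑ s, (∑ m, Γ i s m * y m) * y s)
              + pd2 F y k i * ∑ s, (∑ m, T i s m * y m) * y s) :=
            Finset.sum_congr rfl fun i _ => hlin _ _ _
        _ = ∑ i : Fin n, pd2 F y k i * (2 * (∑ j, ∑ m, Γ i j m * y j * y m)) := by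
            refine Finset.sum_congr rfl fun i _ => ?_
            rw [hGam i, hTas hT i]; ring
        _ = 2 * ∑ i, pd2 F y k i * (∑ j, ∑ m, Γ i j m * y j * y m) := by
            rw [Finset.mul_sum]
            exact Finset.sum_congr rfl fun i _ => by ring
    have c2 : ∑ s : Fin n,
        (∑ i, pd2 F y s i * (2 * (∑ m, Γ i k m * y m) + (∑ m, T i k m * y m))) * y s
        = 0 := by
      calc ∑ s : Fin n,
          (∑ i, pd2 F y s i * (2 * (∑ m, Γ i k m * y m) + (∑ m, T i k m * y m))) * y s
          = ∑ s : Fin n, ∑ i : Fin n,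
              pd2 F y s i * (2 * (∑ m, Γ i k m * y m) + (∑ m, T i k m * y m)) * y s :=
            Finset.sum_congr rfl fun s _ => Finset.sum_mul ..
        _ = ∑ i : Fin n, ∑ s : Fin n,
              pd2 F y s i * (2 * (∑ m, Γ i k m * y m) + (∑ m, T i k m * y m)) * y s :=
            Finset.sum_comm
        _ = ∑ i : Fin n, (2 * (∑ m, Γ i k m * y m) + (∑ m, T i k m * y m))
              * ∑ s : Fin n, pd2 F y s i * y s := by
            refine Finset.sum_congr rfl fun i _ => ?_
            rw [show (2 * (∑ m, Γ i k m * y m) + ∑ m, T i k m * y m)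
                  * (∑ s : Fin n, pd2 F y s i * y s)
                = ∑ s : Fin n, (2 * (∑ m, Γ i k m * y m) + ∑ m, T i k m * y m)
                  * (pd2 F y s i * y s) from Finset.mul_sum ..]
            exact Finset.sum_congr rfl fun s _ => by ring
        _ = 0 := by
            refine Finset.sum_eq_zero fun i _ => ?_
            rw [heul i, mul_zero]
    have c3 : ∑ s : Fin n, (2 * ∑ i, pd F y i * T i k s) * y s
        = 2 * ∑ i, pd F y i * (∑ m, T i k m * y m) := by
      calc ∑ s : Fin n, (2 * ∑ i, pd F y i * T i k s) * y s
          = ∑ s : Fin n, ∑ i : Fin n, 2 * (pd F y i * T i k s) * y s := by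
            refine Finset.sum_congr rfl fun s _ => ?_
            rw [show (2:ℝ) * (∑ i, pd F y i * T i k s)
                = ∑ i, 2 * (pd F y i * T i k s) from Finset.mul_sum .., Finset.sum_mul]
        _ = ∑ i : Fin n, ∑ s : Fin n, 2 * (pd F y i * T i k s) * y s := Finset.sum_comm
        _ = ∑ i : Fin n, 2 * (pd F y i * (∑ m, T i k m * y m)) := by
            refine Finset.sum_congr rfl fun i _ => ?_
            rw [show pd F y i * (∑ m, T i k m * y m)
                  = ∑ m, pd F y i * (T i k m * y m) from Finset.mul_sum ..,
                show (2:ℝ) * (∑ m, pd F y i * (T i k m * y m))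
                  = ∑ m, 2 * (pd F y i * (T i k m * y m)) from Finset.mul_sum ..]
            exact Finset.sum_congr rfl fun m _ => by ring
        _ = 2 * ∑ i, pd F y i * (∑ m, T i k m * y m) :=
            (show (2:ℝ) * (∑ i, pd F y i * (∑ m, T i k m * y m))
              = ∑ i, 2 * (pd F y i * (∑ m, T i k m * y m)) from Finset.mul_sum ..).symm
    have hsplit : ∑ s : Fin n,
        ((∑ i, pd2 F y k i * (2 * (∑ m, Γ i s m * y m) + (∑ m, T i s m * y m)))
          - (∑ i, pd2 F y s i * (2 * (∑ m, Γ i k m * y m) + (∑ m, T i k m * y m)))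
          - 2 * (∑ i, pd F y i * T i k s)) * y s
        = (∑ s : Fin n,
            (∑ i, pd2 F y k i * (2 * (∑ m, Γ i s m * y m) + (∑ m, T i s m * y m))) * y s)
          - (∑ s : Fin n,
            (∑ i, pd2 F y s i * (2 * (∑ m, Γ i k m * y m) + (∑ m, T i k m * y m))) * y s)
          - ∑ s : Fin n, (2 * ∑ i, pd F y i * T i k s) * y s := by
      rw [← Finset.sum_sub_distrib, ← Finset.sum_sub_distrib]
      exact Finset.sum_congr rfl fun s _ => by ring
    rw [hsplit, c1, c2, c3] at hcontr
    linarith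
end

section
/- Let g(θ) = (−sin θ·f'(θ) + cos θ·f(θ))/P(θ), defined where P(θ) ≠ 0, for smooth functions f and P with (f + f'')·P = −sin θ·f' + cos θ·f. Then wherever P ≠ 0, g = f + f'' and g satisfies g'(θ) = −((P'(θ) + sin θ)/P(θ))·g(θ). -/
open Real

theorem stmt18 (f P : ℝ → ℝ) (hf : ContDiff ℝ (⊤ : ℕ∞) f) (hP : ContDiff ℝ (⊤ : ℕ∞) P)
    (hODE : ∀ θ, (f θ + deriv (deriv f) θ) * P θ
        = -sin θ * deriv f θ + cos θ * f θ)
    (g : ℝ → ℝ)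
    (hg : ∀ θ, P θ ≠ 0 → g θ = (-sin θ * deriv f θ + cos θ * f θ) / P θ) :
    ∀ θ, P θ ≠ 0 →
      g θ = f θ + deriv (deriv f) θ ∧
      deriv g θ = -((deriv P θ + sin θ) / P θ) * g θ := by
  intro θ hθ
  have hf' : ContDiff ℝ ((⊤:ℕ∞) : WithTop ℕ∞) (deriv f) :=
    (contDiff_infty_iff_deriv.mp (hf.of_le (by simp))).2
  have hfd : HasDerivAt f (deriv f θ) θ :=
    ((hf.differentiable (by simp)) θ).hasDerivAt
  have hf'd : HasDerivAt (deriv f) (deriv (deriv f) θ) θ :=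
    ((hf'.differentiable (by simp)) θ).hasDerivAt
  have hPd : HasDerivAt P (deriv P θ) θ :=
    ((hP.differentiable (by simp)) θ).hasDerivAt
  have hgθ : g θ = f θ + deriv (deriv f) θ := by
    rw [hg θ hθ, ← hODE θ, mul_div_assoc, div_self hθ, mul_one]
  refine ⟨hgθ, ?_⟩
  set u : ℝ → ℝ := fun x => -sin x * deriv f x + cos x * f x with hu
  have hD : HasDerivAt u
      ((-cos θ * deriv f θ + -sin θ * deriv (deriv f) θ) +
        (-sin θ * f θ + cos θ * deriv f θ)) θ := by
    exact ((Real.hasDerivAt_sin θ).neg.mul hf'd).add ((Real.hasDerivAt_cos θ).mul hfd)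
  have hq : HasDerivAt (fun x => u x / P x)
      ((((-cos θ * deriv f θ + -sin θ * deriv (deriv f) θ) +
          (-sin θ * f θ + cos θ * deriv f θ)) * P θ - u θ * deriv P θ) / (P θ)^2) θ :=
    hD.div hPd hθ
  have hEq : g =ᶠ[nhds θ] fun x => u x / P x := by
    have hopen : IsOpen {x : ℝ | P x ≠ 0} :=
      isOpen_ne.preimage (hP.continuous)
    filter_upwards [hopen.mem_nhds hθ] with x hx
    exact hg x hx
  have hdg : deriv g θ = (((-cos θ * deriv f θ + -sin θ * deriv (deriv f) θ) +
          (-sin θ * f θ + cos θ * deriv f θ)) * P θ - u θ * deriv P θ) / (P θ)^2 := by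
    rw [hEq.deriv_eq, hq.deriv]
  rw [hdg, hgθ]
  have huθ : u θ = (f θ + deriv (deriv f) θ) * P θ := (hODE θ).symm
  rw [huθ]
  field_simp
  ring
end

section
/- Let F = α + β be a Randers norm on ℝⁿ, where α(y) = √(a_{ij}y^iy^j) for a positive definite symmetric matrix a and β(y) = b_iy^i with |b|_α² := a^{ij}b_ib_j < 1 (a^{ij} the inverse matrix). Then the unit ball {y : F(y) ≤ 1} equals the ellipsoid {u + W : h_{ij}u^iu^j ≤ 1} for a suitable positive definite h and vector W with h_{ij}W^iW^j = a^{ij}b_ib_j (Zermelo navigation data), and consequently, if two Randers norms (a, b) and (ã, b̃) on ℝⁿ are related by a linear isometry, then a^{ij}b_ib_j = ã^{ij}b̃_ib̃_j. -/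
open Matrix

/-- The Randers norm `F(y) = √(yᵀ a y) + b ⬝ y`. -/
noncomputable def randers {n : ℕ} (a : Matrix (Fin n) (Fin n) ℝ) (b : Fin n → ℝ)
    (y : Fin n → ℝ) : ℝ :=
  Real.sqrt (y ⬝ᵥ a *ᵥ y) + b ⬝ᵥ y

namespace RandersAux

variable {n : ℕ}

lemma vecMulVec_mulVec' (u v w : Fin n → ℝ) :
    (vecMulVec u v) *ᵥ w = (v ⬝ᵥ w) • u := by
  ext i
  simp [vecMulVec_apply, mulVec, dotProduct, Finset.mul_sum, mul_assoc, mul_comm, mul_left_comm]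

lemma quad_nonneg {a : Matrix (Fin n) (Fin n) ℝ} (ha : a.PosDef) (y : Fin n → ℝ) :
    0 ≤ y ⬝ᵥ a *ᵥ y := by
  simpa using ha.posSemidef.dotProduct_mulVec_nonneg y

lemma quad_pos {a : Matrix (Fin n) (Fin n) ℝ} (ha : a.PosDef) {y : Fin n → ℝ} (hy : y ≠ 0) :
    0 < y ⬝ᵥ a *ᵥ y := by
  simpa using ha.dotProduct_mulVec_pos hy

lemma quad_neg (a : Matrix (Fin n) (Fin n) ℝ) (y : Fin n → ℝ) :
    (-y) ⬝ᵥ a *ᵥ (-y) = y ⬝ᵥ a *ᵥ y := by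
  simp only [mulVec_neg, dotProduct_neg, neg_dotProduct, neg_neg]

/-- entries agree via test vectors -/
lemma vec_eq_of_dot (u v : Fin n → ℝ) (h : ∀ y, u ⬝ᵥ y = v ⬝ᵥ y) : u = v := by
  funext i
  have := h (Pi.single i 1)
  simpa [dotProduct_single] using this

lemma symm_eq_of_quad (A B : Matrix (Fin n) (Fin n) ℝ) (hA : Aᵀ = A) (hB : Bᵀ = B)
    (h : ∀ y, y ⬝ᵥ A *ᵥ y = y ⬝ᵥ B *ᵥ y) : A = B := by
  have key : ∀ (M : Matrix (Fin n) (Fin n) ℝ) (i j : Fin n),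
      (Pi.single i 1 : Fin n → ℝ) ⬝ᵥ M *ᵥ (Pi.single j 1) = M i j := by
    intro M i j
    simp [mulVec_single, single_dotProduct]
  ext i j
  have h1 := h (Pi.single i 1 + Pi.single j 1)
  have h2 := h (Pi.single i 1)
  have h3 := h (Pi.single j 1)
  simp only [add_dotProduct, mulVec_add, dotProduct_add] at h1
  rw [key, key, key, key, key, key, key, key] at h1
  rw [key, key] at h2
  rw [key, key] at h3
  have hAji : A i j = A j i := congrFun (congrFun hA j) i
  have hBji : B i j = B j i := congrFun (congrFun hB j) i
  linarith


lemma transpose_eq_self {A : Matrix (Fin n) (Fin n) ℝ} (hA : A.PosDef) : Aᵀ = A := by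
  have := hA.1
  simpa [Matrix.IsHermitian] using this

lemma part2 (a : Matrix (Fin n) (Fin n) ℝ) (ha : a.PosDef) (b : Fin n → ℝ)
    (at' : Matrix (Fin n) (Fin n) ℝ) (hat : at'.PosDef) (bt : Fin n → ℝ) :
    (∃ L : (Fin n → ℝ) ≃ₗ[ℝ] (Fin n → ℝ),
        ∀ y : Fin n → ℝ, randers at' bt (L y) = randers a b y) →
      b ⬝ᵥ a⁻¹ *ᵥ b = bt ⬝ᵥ at'⁻¹ *ᵥ bt := by
  rintro ⟨L, hL⟩
  have hsplit : ∀ y : Fin n → ℝ,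
      (L y) ⬝ᵥ at' *ᵥ (L y) = y ⬝ᵥ a *ᵥ y ∧ bt ⬝ᵥ (L y) = b ⬝ᵥ y := by
    intro y
    have h1 := hL y
    have h2 := hL (-y)
    unfold randers at h1 h2
    rw [map_neg, quad_neg, quad_neg, dotProduct_neg, dotProduct_neg] at h2
    have hsq : Real.sqrt ((L y) ⬝ᵥ at' *ᵥ (L y)) = Real.sqrt (y ⬝ᵥ a *ᵥ y) := by linarith
    have hlin : bt ⬝ᵥ (L y) = b ⬝ᵥ y := by linarith
    refine ⟨?_, hlin⟩
    have e1 := Real.sq_sqrt (quad_nonneg hat (L y))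
    have e2 := Real.sq_sqrt (quad_nonneg ha y)
    rw [← e1, ← e2, hsq]
  set M := LinearMap.toMatrix' (L : (Fin n → ℝ) →ₗ[ℝ] (Fin n → ℝ)) with hMdef
  set N := LinearMap.toMatrix' (L.symm : (Fin n → ℝ) →ₗ[ℝ] (Fin n → ℝ)) with hNdef
  have hM : ∀ y, M *ᵥ y = L y := by
    intro y
    rw [hMdef, ← Matrix.toLin'_apply, Matrix.toLin'_toMatrix']
    rfl
  have hMN : M * N = 1 := by
    rw [hMdef, hNdef, ← LinearMap.toMatrix'_comp, ← LinearMap.toMatrix'_id]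
    congr 1
    exact LinearMap.ext fun x => L.apply_symm_apply x
  have hNM : N * M = 1 := by
    rw [hMdef, hNdef, ← LinearMap.toMatrix'_comp, ← LinearMap.toMatrix'_id]
    congr 1
    exact LinearMap.ext fun x => L.symm_apply_apply x
  have hquadM : ∀ y : Fin n → ℝ, y ⬝ᵥ (Mᵀ * at' * M) *ᵥ y = y ⬝ᵥ a *ᵥ y := by
    intro y
    rw [← Matrix.mulVec_mulVec, ← Matrix.mulVec_mulVec, dotProduct_mulVec,
      vecMul_transpose, hM]
    exact (hsplit y).1
  have hTat : at'ᵀ = at' := transpose_eq_self hat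
  have haMat : Mᵀ * at' * M = a := by
    apply symm_eq_of_quad
    · rw [transpose_mul, transpose_mul, transpose_transpose, hTat, Matrix.mul_assoc]
    · exact transpose_eq_self ha
    · exact hquadM
  have hbvec : b = Mᵀ *ᵥ bt := by
    apply vec_eq_of_dot
    intro y
    rw [mulVec_transpose, ← dotProduct_mulVec, hM]
    exact ((hsplit y).2).symm
  have hat1 : at' * at'⁻¹ = 1 := Matrix.mul_nonsing_inv _ hat.det_pos.ne'.isUnit
  have haInv : a⁻¹ = N * at'⁻¹ * Nᵀ := by
    apply Matrix.inv_eq_right_inv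
    rw [← haMat]
    calc Mᵀ * at' * M * (N * at'⁻¹ * Nᵀ)
        = Mᵀ * at' * (M * N) * at'⁻¹ * Nᵀ := by noncomm_ring
      _ = Mᵀ * (at' * at'⁻¹) * Nᵀ := by rw [hMN]; noncomm_ring
      _ = Mᵀ * Nᵀ := by rw [hat1]; noncomm_ring
      _ = (N * M)ᵀ := (transpose_mul N M).symm
      _ = 1 := by rw [hNM, transpose_one]
  rw [haInv, hbvec]
  rw [mulVec_transpose, ← dotProduct_mulVec, Matrix.mulVec_vecMul]
  have h1 : Nᵀ * Mᵀ = 1 := by rw [← transpose_mul, hMN, transpose_one]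
  have key : M * (N * at'⁻¹ * Nᵀ * Mᵀ) = at'⁻¹ := by
    calc M * (N * at'⁻¹ * Nᵀ * Mᵀ) = (M * N) * at'⁻¹ * (Nᵀ * Mᵀ) := by noncomm_ring
      _ = at'⁻¹ := by rw [hMN, h1, Matrix.one_mul, Matrix.mul_one]
  rw [Matrix.mulVec_mulVec, key]


lemma quad_sub (A : Matrix (Fin n) (Fin n) ℝ) (u v : Fin n → ℝ) :
    (u - v) ⬝ᵥ A *ᵥ (u - v)
      = u ⬝ᵥ A *ᵥ u - v ⬝ᵥ A *ᵥ u - u ⬝ᵥ A *ᵥ v + v ⬝ᵥ A *ᵥ v := by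
  simp only [sub_dotProduct, dotProduct_sub, mulVec_sub]
  ring

lemma quad_expand (A : Matrix (Fin n) (Fin n) ℝ) (u v : Fin n → ℝ) (t : ℝ) :
    (u - t • v) ⬝ᵥ A *ᵥ (u - t • v)
      = u ⬝ᵥ A *ᵥ u - t * (v ⬝ᵥ A *ᵥ u) - t * (u ⬝ᵥ A *ᵥ v) + t^2 * (v ⬝ᵥ A *ᵥ v) := by
  simp only [sub_dotProduct, dotProduct_sub, mulVec_sub, smul_dotProduct, dotProduct_smul,
    mulVec_smul, smul_eq_mul]
  ring

lemma part1 (a : Matrix (Fin n) (Fin n) ℝ) (ha : a.PosDef) (b : Fin n → ℝ)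
    (hb : b ⬝ᵥ a⁻¹ *ᵥ b < 1) :
    ∃ (h : Matrix (Fin n) (Fin n) ℝ) (W : Fin n → ℝ), h.PosDef ∧
        {y : Fin n → ℝ | randers a b y ≤ 1}
          = (fun u => u + W) '' {u : Fin n → ℝ | u ⬝ᵥ h *ᵥ u ≤ 1} ∧
        W ⬝ᵥ h *ᵥ W = b ⬝ᵥ a⁻¹ *ᵥ b := by
  set s : ℝ := b ⬝ᵥ a⁻¹ *ᵥ b with hsdef
  have hs0 : 0 ≤ s := quad_nonneg ha.inv b
  have hs1 : s < 1 := hb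
  have h1s : (0:ℝ) < 1 - s := by linarith
  set c : Fin n → ℝ := a⁻¹ *ᵥ b with hcdef
  have hdet : IsUnit a.det := ha.det_pos.ne'.isUnit
  have hinv : a * a⁻¹ = 1 := Matrix.mul_nonsing_inv _ hdet
  have hac : a *ᵥ c = b := by
    rw [hcdef, Matrix.mulVec_mulVec, hinv, Matrix.one_mulVec]
  have hTa : aᵀ = a := transpose_eq_self ha
  have hvm : c ᵥ* a = a *ᵥ c := by rw [← Matrix.mulVec_transpose, hTa]
  have hcdot : ∀ w, c ⬝ᵥ a *ᵥ w = b ⬝ᵥ w := by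
    intro w
    rw [dotProduct_mulVec, hvm, hac]
  have hbc : b ⬝ᵥ c = s := by rw [hcdef, hsdef]
  have hcc : c ⬝ᵥ a *ᵥ c = s := by rw [hcdot c, hbc]
  have hCS : ∀ y, (b ⬝ᵥ y)^2 ≤ s * (y ⬝ᵥ a *ᵥ y) := by
    intro y
    rcases eq_or_lt_of_le hs0 with h0 | h0
    · have hbz : b = 0 := by
        by_contra hbne
        exact absurd (quad_pos ha.inv hbne) (by rw [← hsdef, ← h0]; simp)
      rw [hbz, ← h0]
      simp
    · have hyac : y ⬝ᵥ a *ᵥ c = b ⬝ᵥ y := by rw [hac, dotProduct_comm]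
      have hq := quad_nonneg ha y
      have hnn := quad_nonneg ha (s • y - (b ⬝ᵥ y) • c)
      simp only [sub_dotProduct, dotProduct_sub, mulVec_sub, smul_dotProduct, dotProduct_smul,
        mulVec_smul, smul_eq_mul] at hnn
      rw [hcdot y, hyac, hcc] at hnn
      nlinarith [hnn, h0, hq]
  set M : Matrix (Fin n) (Fin n) ℝ := a - vecMulVec b b with hMdef
  set hm : Matrix (Fin n) (Fin n) ℝ := (1-s) • M with hhdef
  set W : Fin n → ℝ := (-(1-s)⁻¹) • c with hWdef
  have hquadh : ∀ z w, z ⬝ᵥ hm *ᵥ w = (1-s) * (z ⬝ᵥ a *ᵥ w - (b ⬝ᵥ z) * (b ⬝ᵥ w)) := by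
    intro z w
    rw [hhdef, hMdef, smul_mulVec, dotProduct_smul, sub_mulVec, dotProduct_sub,
      vecMulVec_mulVec', dotProduct_smul, smul_eq_mul, smul_eq_mul, dotProduct_comm z b]
    ring
  have hbW : b ⬝ᵥ W = -((1-s)⁻¹ * s) := by
    rw [hWdef, dotProduct_smul, smul_eq_mul, hbc]; ring
  have haW : a *ᵥ W = (-(1-s)⁻¹) • b := by rw [hWdef, mulVec_smul, hac]
  have hWay : ∀ y, W ⬝ᵥ a *ᵥ y = -((1-s)⁻¹ * (b ⬝ᵥ y)) := by
    intro y; rw [hWdef, smul_dotProduct, hcdot y, smul_eq_mul]; ring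
  have hyaW : ∀ y, y ⬝ᵥ a *ᵥ W = -((1-s)⁻¹ * (b ⬝ᵥ y)) := by
    intro y; rw [haW, dotProduct_smul, smul_eq_mul, dotProduct_comm y b]; ring
  have hWaW : W ⬝ᵥ a *ᵥ W = (1-s)⁻¹ * ((1-s)⁻¹ * s) := by
    rw [hWay W, hbW]; ring
  refine ⟨hm, W, ?_, ?_, ?_⟩
  · refine Matrix.PosDef.of_dotProduct_mulVec_pos ?_ ?_
    · have hT : hmᵀ = hm := by
        rw [hhdef, hMdef, transpose_smul, transpose_sub, hTa]
        congr 2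
        ext i j
        simp [vecMulVec_apply, mul_comm]
      simpa [Matrix.IsHermitian] using hT
    · intro x hx
      have hq : 0 < x ⬝ᵥ a *ᵥ x := quad_pos ha hx
      have hcs := hCS x
      simp only [star_trivial]
      rw [hquadh x x]
      have hpos : 0 < x ⬝ᵥ a *ᵥ x - (b ⬝ᵥ x) * (b ⬝ᵥ x) := by nlinarith
      exact mul_pos h1s hpos
  · ext y
    simp only [Set.mem_setOf_eq, Set.mem_image]
    have himg : (∃ u, u ⬝ᵥ hm *ᵥ u ≤ 1 ∧ u + W = y) ↔ (y - W) ⬝ᵥ hm *ᵥ (y - W) ≤ 1 := by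
      constructor
      · rintro ⟨u, hu, rfl⟩
        simpa [add_sub_cancel_right] using hu
      · intro hy
        exact ⟨y - W, hy, by abel⟩
    have hexp : (y - W) ⬝ᵥ hm *ᵥ (y - W)
        = 1 + (1-s) * ((y ⬝ᵥ a *ᵥ y) - (1 - b ⬝ᵥ y)^2) := by
      rw [hquadh, quad_sub a y W, hWay y, hyaW y, hWaW, dotProduct_sub, hbW]
      field_simp
      ring
    have hmain : randers a b y ≤ 1 ↔ (y ⬝ᵥ a *ᵥ y) ≤ (1 - b ⬝ᵥ y)^2 := by
      unfold randers
      constructor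
      · intro hy
        have h1p : Real.sqrt (y ⬝ᵥ a *ᵥ y) ≤ 1 - b ⬝ᵥ y := by linarith
        have h0p : 0 ≤ 1 - b ⬝ᵥ y := le_trans (Real.sqrt_nonneg _) h1p
        have hss := Real.sq_sqrt (quad_nonneg ha y)
        nlinarith [Real.sqrt_nonneg (y ⬝ᵥ a *ᵥ y)]
      · intro hy
        have hp1 : b ⬝ᵥ y ≤ 1 := by
          by_contra hp
          push_neg at hp
          have h2 := hCS y
          nlinarith [quad_nonneg ha y, sq_nonneg (1 - b ⬝ᵥ y),
            mul_nonneg hs0 (quad_nonneg ha y)]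
        have hle : Real.sqrt (y ⬝ᵥ a *ᵥ y) ≤ 1 - b ⬝ᵥ y := by
          rw [show (1:ℝ) - b ⬝ᵥ y = Real.sqrt ((1 - b ⬝ᵥ y)^2) from
            (Real.sqrt_sq (by linarith)).symm]
          exact Real.sqrt_le_sqrt hy
        linarith
    rw [hmain, himg, hexp]
    constructor
    · intro hy; nlinarith
    · intro hy; nlinarith
  · rw [hquadh, hWaW, hbW]
    field_simp

end RandersAux

theorem stmt19 (n : ℕ)
    (a : Matrix (Fin n) (Fin n) ℝ) (ha : a.PosDef) (b : Fin n → ℝ)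
    (hb : b ⬝ᵥ a⁻¹ *ᵥ b < 1)
    (at' : Matrix (Fin n) (Fin n) ℝ) (hat : at'.PosDef) (bt : Fin n → ℝ)
    (hbt : bt ⬝ᵥ at'⁻¹ *ᵥ bt < 1) :
    (∃ (h : Matrix (Fin n) (Fin n) ℝ) (W : Fin n → ℝ), h.PosDef ∧
        {y : Fin n → ℝ | randers a b y ≤ 1}
          = (fun u => u + W) '' {u : Fin n → ℝ | u ⬝ᵥ h *ᵥ u ≤ 1} ∧
        W ⬝ᵥ h *ᵥ W = b ⬝ᵥ a⁻¹ *ᵥ b) ∧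
    ((∃ L : (Fin n → ℝ) ≃ₗ[ℝ] (Fin n → ℝ),
        ∀ y : Fin n → ℝ, randers at' bt (L y) = randers a b y) →
      b ⬝ᵥ a⁻¹ *ᵥ b = bt ⬝ᵥ at'⁻¹ *ᵥ bt) := by
  exact ⟨RandersAux.part1 a ha b hb, RandersAux.part2 a ha b at' hat bt⟩
end
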